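/- Let N ≥ 1, m₁ ≥ 1, m₂ ≥ 1, let u : Fin m₁ → (ZMod N → ZMod 4), v : Fin m₂ → (ZMod N → ZMod 4), κ : Fin m₁ → ZMod 4, κ' : Fin m₂ → ZMod 4, and define s(t) = (1+i) · ∑_{k=0}^{m₁−1} 2^k · i^{u_k(t)} · i^{κ_k} and s'(t) = (1+i) · ∑_{l=0}^{m₂−1} 2^l · i^{v_l(t)} · i^{κ'_l}. Fix τ ∈ ZMod N and suppose |θ_{u_k,v_l}(τ)| ≤ 1 + √(N+1) for all k, l. Then |θ_{s,s'}(τ)| ≤ 2·(2^{m₁} − 1)·(2^{m₂} − 1)·(1 + √(N+1)). -/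

import Mathlib

/-- For `a ∈ ZMod 4`, the complex number `i^a := Complex.I ^ a.val`. -/
noncomputable def zi (a : ZMod 4) : ℂ := Complex.I ^ a.val

/-- Periodic correlation of complex sequences of period `N` at shift `τ`:
`θ_{s,s'}(τ) = ∑_t s(t+τ) · conj (s'(t))`. -/
noncomputable def pcorr {N : ℕ} [NeZero N] (s s' : ZMod N → ℂ) (τ : ZMod N) : ℂ :=
  ∑ t : ZMod N, s (t + τ) * (starRingEnd ℂ) (s' t)

/-- Periodic correlation of quaternary sequences of period `N` at shift `τ`:
`θ_{u,v}(τ) = ∑_t i^{u(t+τ)} · conj (i^{v(t)})`. -/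
noncomputable def qcorr {N : ℕ} [NeZero N] (u v : ZMod N → ZMod 4) (τ : ZMod N) : ℂ :=
  ∑ t : ZMod N, zi (u (t + τ)) * (starRingEnd ℂ) (zi (v t))

/-! Correlation is sesquilinear, so θ_{s,s'}(τ) expands as
`∑_{k,l} c_k · conj c'_l · θ_{u_k,v_l}(τ)` with `c_k = (1+i) 2^k i^{κ_k}`. The triangle inequality
then bounds it by `(∑ |c_k|) (∑ |c'_l|) (1 + √(N+1))`, and `∑ |c_k| = |1+i| (2^{m₁} - 1)` with
`|1+i|² = 2`. -/

lemma norm_zi (a : ZMod 4) : ‖zi a‖ = 1 := by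
  simp [zi]

lemma sum_fin_two_pow (m : ℕ) : ∑ k : Fin m, (2 : ℝ) ^ (k : ℕ) = 2 ^ m - 1 := by
  rw [Fin.sum_univ_eq_sum_range, geom_sum_eq (by norm_num)]
  norm_num

lemma norm_one_add_I_sq : ‖1 + Complex.I‖ ^ 2 = 2 := by
  norm_num [← Complex.normSq_eq_norm_sq, Complex.normSq_apply]

lemma qcorr_eq_pcorr {N : ℕ} [NeZero N] (u v : ZMod N → ZMod 4) (τ : ZMod N) :
    qcorr u v τ = pcorr (fun t => zi (u t)) (fun t => zi (v t)) τ :=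
  rfl

section Correlation

variable {N : ℕ} [NeZero N] {ι ι' : Type*} [Fintype ι] [Fintype ι']

lemma pcorr_sum_left (f : ι → ZMod N → ℂ) (s' : ZMod N → ℂ) (τ : ZMod N) :
    pcorr (fun t => ∑ k, f k t) s' τ = ∑ k, pcorr (f k) s' τ := by
  simp only [pcorr, Finset.sum_mul]
  exact Finset.sum_comm

lemma pcorr_sum_right (s : ZMod N → ℂ) (g : ι' → ZMod N → ℂ) (τ : ZMod N) :
    pcorr s (fun t => ∑ l, g l t) τ = ∑ l, pcorr s (g l) τ := by
  simp only [pcorr, map_sum, Finset.mul_sum]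
  exact Finset.sum_comm

lemma pcorr_mul_left (c : ℂ) (s s' : ZMod N → ℂ) (τ : ZMod N) :
    pcorr (fun t => c * s t) s' τ = c * pcorr s s' τ := by
  simp only [pcorr, Finset.mul_sum, mul_assoc]

lemma pcorr_mul_right (c : ℂ) (s s' : ZMod N → ℂ) (τ : ZMod N) :
    pcorr s (fun t => c * s' t) τ = starRingEnd ℂ c * pcorr s s' τ := by
  simp only [pcorr, map_mul, Finset.mul_sum]
  exact Finset.sum_congr rfl fun t _ => by ring

lemma pcorr_sum_mul_sum (a : ι → ℂ) (b : ι' → ℂ) (f : ι → ZMod N → ℂ)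
    (g : ι' → ZMod N → ℂ) (τ : ZMod N) :
    pcorr (fun t => ∑ k, a k * f k t) (fun t => ∑ l, b l * g l t) τ
      = ∑ k, ∑ l, a k * starRingEnd ℂ (b l) * pcorr (f k) (g l) τ := by
  rw [pcorr_sum_left]
  refine Finset.sum_congr rfl fun k _ => ?_
  rw [pcorr_mul_left, pcorr_sum_right, Finset.mul_sum]
  refine Finset.sum_congr rfl fun l _ => ?_
  rw [pcorr_mul_right]
  ring

lemma norm_pcorr_sum_mul_sum_le (a : ι → ℂ) (b : ι' → ℂ) (f : ι → ZMod N → ℂ)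
    (g : ι' → ZMod N → ℂ) (τ : ZMod N) {B : ℝ} (hB : ∀ k l, ‖pcorr (f k) (g l) τ‖ ≤ B) :
    ‖pcorr (fun t => ∑ k, a k * f k t) (fun t => ∑ l, b l * g l t) τ‖
      ≤ (∑ k, ‖a k‖) * (∑ l, ‖b l‖) * B := by
  rw [pcorr_sum_mul_sum, Finset.sum_mul_sum, Finset.sum_mul]
  refine (norm_sum_le _ _).trans (Finset.sum_le_sum fun k _ => ?_)
  rw [Finset.sum_mul]
  refine (norm_sum_le _ _).trans (Finset.sum_le_sum fun l _ => ?_)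
  rw [norm_mul, norm_mul, Complex.norm_conj]
  exact mul_le_mul_of_nonneg_left (hB k l) (by positivity)

end Correlation

lemma qam_eq_sum_mul {N m : ℕ} (u : Fin m → ZMod N → ZMod 4) (κ : Fin m → ZMod 4) :
    (fun t => (1 + Complex.I) * ∑ k : Fin m, (2 : ℂ) ^ (k : ℕ) * zi (u k t) * zi (κ k))
      = fun t => ∑ k : Fin m, ((1 + Complex.I) * 2 ^ (k : ℕ) * zi (κ k)) * zi (u k t) := by
  ext t
  rw [Finset.mul_sum]
  exact Finset.sum_congr rfl fun k _ => by ring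

lemma sum_norm_qam_coeff (m : ℕ) (κ : Fin m → ZMod 4) :
    ∑ k : Fin m, ‖(1 + Complex.I) * 2 ^ (k : ℕ) * zi (κ k)‖
      = ‖1 + Complex.I‖ * (2 ^ m - 1) := by
  simp only [norm_mul, norm_pow, norm_zi, Complex.norm_ofNat, mul_one, ← Finset.mul_sum,
    sum_fin_two_pow]

theorem qam_variable_rate_correlation_bound_general (N m₁ m₂ : ℕ) [NeZero N]
    (u : Fin m₁ → ZMod N → ZMod 4) (v : Fin m₂ → ZMod N → ZMod 4)
    (κ : Fin m₁ → ZMod 4) (κ' : Fin m₂ → ZMod 4) (τ : ZMod N)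
    (hcorr : ∀ (k : Fin m₁) (l : Fin m₂),
      ‖qcorr (u k) (v l) τ‖ ≤ 1 + Real.sqrt (N + 1)) :
    ‖pcorr
      (fun t => (1 + Complex.I) * ∑ k : Fin m₁, (2 : ℂ) ^ (k : ℕ) * zi (u k t) * zi (κ k))
      (fun t => (1 + Complex.I) * ∑ l : Fin m₂, (2 : ℂ) ^ (l : ℕ) * zi (v l t) * zi (κ' l))
      τ‖
    ≤ 2 * (2 ^ m₁ - 1) * (2 ^ m₂ - 1) * (1 + Real.sqrt (N + 1)) := by
  rw [qam_eq_sum_mul, qam_eq_sum_mul]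
  refine (norm_pcorr_sum_mul_sum_le _ _ (fun k t => zi (u k t)) (fun l t => zi (v l t)) τ
    (by simpa only [qcorr_eq_pcorr] using hcorr)).trans_eq ?_
  rw [sum_norm_qam_coeff, sum_norm_qam_coeff, ← norm_one_add_I_sq]
  ring

/-- Cross-family correlation bound enabling variable-rate signalling:
for QAM sequences over constellations of sizes `4^{m₁}` and `4^{m₂}` whose component
correlations at shift `τ` are bounded by `1 + √(N+1)`, the correlation is bounded by
`2(2^{m₁} - 1)(2^{m₂} - 1)(1 + √(N+1))`. -/
theorem qam_variable_rate_correlation_bound (N m₁ m₂ : ℕ) [NeZero N]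
    (hm₁ : 1 ≤ m₁) (hm₂ : 1 ≤ m₂)
    (u : Fin m₁ → ZMod N → ZMod 4) (v : Fin m₂ → ZMod N → ZMod 4)
    (κ : Fin m₁ → ZMod 4) (κ' : Fin m₂ → ZMod 4) (τ : ZMod N)
    (hcorr : ∀ (k : Fin m₁) (l : Fin m₂),
      ‖qcorr (u k) (v l) τ‖ ≤ 1 + Real.sqrt (N + 1)) :
    ‖pcorr
      (fun t => (1 + Complex.I) * ∑ k : Fin m₁, (2 : ℂ) ^ (k : ℕ) * zi (u k t) * zi (κ k))
      (fun t => (1 + Complex.I) * ∑ l : Fin m₂, (2 : ℂ) ^ (l : ℕ) * zi (v l t) * zi (κ' l))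
      τ‖
    ≤ 2 * (2 ^ m₁ - 1) * (2 ^ m₂ - 1) * (1 + Real.sqrt (N + 1)) :=
  qam_variable_rate_correlation_bound_general N m₁ m₂ u v κ κ' τ hcorr
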